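/- Let F_l, F_r : ℝ → Bool and suppose the pair is not one-directional, i.e. neither (for all v > 0, F_l(v) = true and F_r(v) = false) nor (for all v > 0, F_r(v) = true and F_l(v) = false) holds. Then for every ε ∈ (0,1) there exist L > 0 and a finite multiset M of intervals, all of length L, with opt(M) = 2, such that when the elements of M arrive in uniformly random order, the final solution of the memoryless algorithm A_{F_l,F_r} has cardinality at most 1 with probability at least 1 − ε. (That is, every deterministic memoryless algorithm that is not one-directional can be forced to competitive ratio at least 2 for unweighted single-length interval selection under random-order arrivals.) -/

import Mathlib

open scoped Classical

/-- An interval: a pair `(s, f)` of reals with `s < f`, identified with `[s, f) ⊆ ℝ`. -/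
structure Ivl where
  s : ℝ
  f : ℝ
  lt : s < f

namespace Ivl

noncomputable instance : DecidableEq Ivl := fun a b =>
  decidable_of_iff (a.s = b.s ∧ a.f = b.f) (by cases a; cases b; simp)

/-- The set of points covered by an interval. -/
def toSet (I : Ivl) : Set ℝ := Set.Ico I.s I.f

/-- The length of an interval. -/
def length (I : Ivl) : ℝ := I.f - I.s

/-- Two intervals conflict if their point sets intersect. -/
def Conflict (I J : Ivl) : Prop := (I.toSet ∩ J.toSet).Nonempty

/-- A finite set of intervals is feasible (pairwise disjoint) if no two distinct members
conflict. -/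
def Feasible (S : Finset Ivl) : Prop :=
  ∀ I ∈ S, ∀ J ∈ S, I ≠ J → ¬ Conflict I J

end Ivl

/-- `optM M` is the maximum cardinality of a pairwise-disjoint finite set of intervals all of
which occur in the multiset `M`. -/
noncomputable def optM (M : Multiset Ivl) : ℕ :=
  (M.toFinset.powerset.filter (fun T => Ivl.Feasible T)).sup Finset.card

/-- One step of the deterministic memoryless algorithm `A_{F_l, F_r}` on single-length
instances: on arrival of `I`, let `C` be the set of currently scheduled intervals conflicting
with `I`.  If `C = ∅`, take `I`.  If `C = {J}` and `I` overlaps `J` on the left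
(`I.s < J.s`, overlap `I.f - J.s`), replace `J` by `I` iff `F_l` of the overlap is `true`;
if `I` overlaps `J` on the right (`J.s < I.s`, overlap `J.f - I.s`), replace iff `F_r` of
the overlap is `true`.  In all other cases (identical interval, or two or more conflicts)
leave the solution unchanged. -/
noncomputable def memStep (Fl Fr : ℝ → Bool) (S : Finset Ivl) (I : Ivl) : Finset Ivl :=
  let C := S.filter (fun J => Ivl.Conflict J I)
  if C = ∅ then insert I S
  else if hC : ∃ J : Ivl, C = {J} then
    let J := hC.choose
    if I.s < J.s then (if Fl (I.f - J.s) then insert I (S.erase J) else S)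
    else if J.s < I.s then (if Fr (J.f - I.s) then insert I (S.erase J) else S)
    else S
  else S

/-- The memoryless algorithm `A_{F_l, F_r}` run on a list of arrivals. -/
noncomputable def memRun (Fl Fr : ℝ → Bool) (σ : List Ivl) : Finset Ivl :=
  σ.foldl (memStep Fl Fr) ∅

/-!
If `F_l` rejects some overlap `v` and `F_r` rejects some overlap `u`, take the disjoint
intervals `X = [0, u+v)`, `Y = [u+v, 2(u+v))` and `k` copies of `Z = [u, 2u+v)`, which meets `X`
on the left in an overlap `v` and `Y` on the right in an overlap `u`: a copy of `Z` arrives first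
with probability `k/(k+2)`, and then it is never replaced. Otherwise `F_l(v) = F_r(v) = true` for
some `v`; with `X = [0, 2v)`, `Y = [2v, 4v)` and `k` copies of `Z = [v, 3v)` every arrival replaces
the single interval held so far, unless `X` and `Y` arrive consecutively, which happens with
probability `2/(k+2)`.
-/

open Finset Equiv
open scoped Nat

def Fin.adjacentPairs (n : ℕ) : Finset (Fin n × Fin n) :=
  {p | p.1.val + 1 = p.2.val ∨ p.2.val + 1 = p.1.val}

theorem Fin.card_adjacentPairs_le (n : ℕ) : #(Fin.adjacentPairs n) ≤ 2 * n :=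
  calc #(Fin.adjacentPairs n) ≤ #(univ : Finset (Fin n × Bool)) := by
        refine card_le_card_of_injOn (fun p => (p.1, decide (p.1 < p.2))) (fun _ _ => mem_univ _)
          fun p hp q hq h => ?_
        simp only [adjacentPairs, coe_filter, Set.mem_ofPred_eq] at hp hq
        simp only [Prod.mk.injEq, decide_eq_decide, Fin.lt_def, Fin.ext_iff] at h
        ext <;> omega
    _ = 2 * n := by simp [mul_comm]

namespace Equiv.Perm

variable {ι α : Type*} [Fintype ι] [Fintype α] [DecidableEq α]

theorem card_filter_forall_apply_eq_mul_descFactorial (f g : ι ↪ α) :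
    #{π : Perm α | ∀ i, π (f i) = g i} * (Fintype.card α).descFactorial (Fintype.card ι) =
      (Fintype.card α)! := by
  have hfiber (h : ι ↪ α) :
      #{π : Perm α | f.trans π.toEmbedding = h} = #{π : Perm α | ∀ i, π (f i) = g i} := by
    obtain ⟨τ, hτ⟩ := exists_extending_pair h g h.injective g.injective
    refine card_equiv (Equiv.mulLeft τ) fun π => ?_
    simp only [mem_filter, mem_univ, true_and, Function.Embedding.ext_iff,
      Function.Embedding.trans_apply, Equiv.coe_mulLeft, Perm.mul_apply, ← hτ,
      Equiv.toEmbedding_apply, τ.injective.eq_iff]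
  have := card_eq_sum_card_fiberwise (s := univ) (t := univ)
    (f := fun π : Perm α => f.trans π.toEmbedding) fun _ _ => mem_univ _
  rw [sum_congr rfl fun h _ => hfiber h, sum_const, card_univ, card_univ,
    Fintype.card_embedding_eq, Fintype.card_perm, smul_eq_mul] at this
  rw [this, mul_comm]

theorem card_filter_apply_eq_mul (t a : α) :
    #{π : Perm α | π t = a} * Fintype.card α = (Fintype.card α)! := by
  simpa using card_filter_forall_apply_eq_mul_descFactorial
    ⟨fun _ : Unit => t, Function.injective_of_subsingleton _⟩
    ⟨fun _ : Unit => a, Function.injective_of_subsingleton _⟩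

theorem card_filter_apply_eq_and_apply_eq_mul {t u a b : α} (htu : t ≠ u) (hab : a ≠ b) :
    #{π : Perm α | π t = a ∧ π u = b} * (Fintype.card α * (Fintype.card α - 1)) =
      (Fintype.card α)! := by
  have hinj {x y : α} (hxy : x ≠ y) : Function.Injective ![x, y] := by
    intro i j; fin_cases i <;> fin_cases j <;> simp [hxy, hxy.symm]
  simpa [Fin.forall_fin_two, Nat.descFactorial, mul_comm] using
    card_filter_forall_apply_eq_mul_descFactorial ⟨_, hinj htu⟩ ⟨_, hinj hab⟩

theorem card_filter_apply_eq_or_apply_eq_mul_le (t a b : α) :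
    #{π : Perm α | π t = a ∨ π t = b} * Fintype.card α ≤ 2 * (Fintype.card α)! :=
  calc _ ≤ (#{π : Perm α | π t = a} + #{π : Perm α | π t = b}) * Fintype.card α := by
        rw [filter_or]; gcongr; exact card_union_le _ _
    _ = 2 * (Fintype.card α)! := by
        rw [add_mul, card_filter_apply_eq_mul, card_filter_apply_eq_mul, two_mul]

theorem card_filter_exists_mem_mul_le (P : Finset (α × α)) (hP : ∀ p ∈ P, p.1 ≠ p.2)
    {a b : α} (hab : a ≠ b) :
    #{π : Perm α | ∃ p ∈ P, π p.1 = a ∧ π p.2 = b} * (Fintype.card α * (Fintype.card α - 1)) ≤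
      #P * (Fintype.card α)! :=
  calc _ ≤ (∑ p ∈ P, #{π : Perm α | π p.1 = a ∧ π p.2 = b}) *
          (Fintype.card α * (Fintype.card α - 1)) := by
        gcongr
        refine (card_le_card fun π hπ => ?_).trans card_biUnion_le
        simpa using hπ
    _ = #P * (Fintype.card α)! := by
        rw [sum_mul, sum_congr rfl fun p hp => card_filter_apply_eq_and_apply_eq_mul (hP p hp) hab,
          sum_const, smul_eq_mul]

theorem card_filter_exists_mem_adjacentPairs_mul_le {n : ℕ} {a b : Fin n} (hab : a ≠ b) :
    #{π : Perm (Fin n) | ∃ p ∈ Fin.adjacentPairs n, π p.1 = a ∧ π p.2 = b} * (n - 1) ≤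
      2 * n ! := by
  have hP : ∀ p ∈ Fin.adjacentPairs n, p.1 ≠ p.2 := by
    intro p hp h
    simp [Fin.adjacentPairs, h] at hp
  have hpos : 0 < n := Fin.pos a
  have hbad := card_filter_exists_mem_mul_le _ hP hab
  rw [Fintype.card_fin] at hbad
  refine Nat.le_of_mul_le_mul_left ?_ hpos
  calc n * (_ * (n - 1)) = _ * (n * (n - 1)) := by ring
    _ ≤ #(Fin.adjacentPairs n) * n ! := hbad
    _ ≤ 2 * n * n ! := Nat.mul_le_mul_right _ (Fin.card_adjacentPairs_le n)
    _ = n * (2 * n !) := by ring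

end Equiv.Perm

theorem one_sub_le_card_filter_div_card {β : Type*} [Fintype β] [Nonempty β]
    {p q : β → Prop} [DecidablePred p] [DecidablePred q] (hpq : ∀ x, ¬ q x → p x)
    {c m : ℕ} (hm : 0 < m) {ε : ℝ} (hcm : c ≤ ε * m) (hq : #{x | q x} * m ≤ c * Fintype.card β) :
    1 - ε ≤ #{x | p x} / Fintype.card β := by
  have hβ : (0 : ℝ) < Fintype.card β := by exact_mod_cast Fintype.card_pos
  have hsplit : (#{x | q x} : ℝ) + #{x | ¬ q x} = Fintype.card β := by
    exact_mod_cast card_filter_add_card_filter_not (s := univ) q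
  have hgood : (#{x | ¬ q x} : ℝ) ≤ #{x | p x} := by
    exact_mod_cast card_le_card (monotone_filter_right _ fun x _ => hpq x)
  have hbad : (#{x | q x} : ℝ) ≤ ε * Fintype.card β := by
    refine le_of_mul_le_mul_right ?_ (Nat.cast_pos.2 hm)
    calc (#{x | q x} : ℝ) * m ≤ c * Fintype.card β := by exact_mod_cast hq
      _ ≤ ε * m * Fintype.card β := by gcongr
      _ = ε * Fintype.card β * m := by ring
  rw [le_div_iff₀ hβ]
  linarith

namespace Ivl

theorem conflict_iff {I J : Ivl} : Conflict I J ↔ I.s < J.f ∧ J.s < I.f := by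
  simp only [Conflict, toSet, Set.Ico_inter_Ico, Set.nonempty_Ico, max_lt_iff, lt_min_iff]
  exact ⟨fun ⟨⟨_, h⟩, h', _⟩ => ⟨h', h⟩, fun ⟨h, h'⟩ => ⟨⟨I.lt, h'⟩, h, J.lt⟩⟩

theorem conflict_comm {I J : Ivl} : Conflict I J ↔ Conflict J I := by
  rw [conflict_iff, conflict_iff, and_comm]

theorem conflict_self (I : Ivl) : Conflict I I :=
  conflict_iff.2 ⟨I.lt, I.lt⟩

def ofLength (s L : ℝ) (hL : 0 < L) : Ivl := ⟨s, s + L, by linarith⟩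

theorem length_ofLength (s L : ℝ) (hL : 0 < L) : (ofLength s L hL).length = L := by
  simp [ofLength, length]

theorem conflict_ofLength_iff {s t L : ℝ} (hL : 0 < L) :
    Conflict (ofLength s L hL) (ofLength t L hL) ↔ |s - t| < L := by
  rw [conflict_iff, abs_sub_lt_iff]
  simp only [ofLength]
  constructor <;> rintro ⟨h, h'⟩ <;> constructor <;> linarith

end Ivl

section memStep

variable (Fl Fr : ℝ → Bool)

theorem memStep_empty (I : Ivl) : memStep Fl Fr ∅ I = {I} := by
  simp [memStep]

theorem memStep_singleton_of_conflict {I J : Ivl} (h : Ivl.Conflict J I) :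
    memStep Fl Fr {J} I =
      if I.s < J.s then (if Fl (I.f - J.s) then {I} else {J})
      else if J.s < I.s then (if Fr (J.f - I.s) then {I} else {J})
      else {J} := by
  have hC : ({J} : Finset Ivl).filter (fun K => Ivl.Conflict K I) = {J} := by
    rw [filter_singleton, if_pos h]
  have hex : ∃ K : Ivl, ({J} : Finset Ivl) = {K} := ⟨J, rfl⟩
  have hJ : hex.choose = J := (singleton_injective hex.choose_spec).symm
  simp only [memStep, hC, singleton_ne_empty, if_false, dif_pos hex, hJ, erase_singleton,
    insert_empty]

theorem memStep_singleton_self (J : Ivl) : memStep Fl Fr {J} J = {J} := by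
  simp [memStep_singleton_of_conflict Fl Fr (Ivl.conflict_self J)]

variable {L : ℝ} (hL : 0 < L)

theorem memStep_ofLength_of_lt {s t : ℝ} (hst : s < t) (hts : t < s + L) :
    memStep Fl Fr {Ivl.ofLength t L hL} (Ivl.ofLength s L hL) =
      if Fl (s + L - t) then {Ivl.ofLength s L hL} else {Ivl.ofLength t L hL} := by
  rw [memStep_singleton_of_conflict Fl Fr ((Ivl.conflict_ofLength_iff hL).2 ?_)]
  · exact if_pos hst
  · rw [abs_sub_lt_iff]; constructor <;> linarith

theorem memStep_ofLength_of_gt {s t : ℝ} (hts : t < s) (hst : s < t + L) :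
    memStep Fl Fr {Ivl.ofLength t L hL} (Ivl.ofLength s L hL) =
      if Fr (t + L - s) then {Ivl.ofLength s L hL} else {Ivl.ofLength t L hL} := by
  rw [memStep_singleton_of_conflict Fl Fr ((Ivl.conflict_ofLength_iff hL).2 ?_)]
  · exact (if_neg hts.not_gt).trans (if_pos hts)
  · rw [abs_sub_lt_iff]; constructor <;> linarith

theorem foldl_memStep_of_forall_eq {S : Finset Ivl} {l : List Ivl}
    (h : ∀ x ∈ l, memStep Fl Fr S x = S) : l.foldl (memStep Fl Fr) S = S := by
  induction l with
  | nil => rfl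
  | cons x l ih =>
    rw [List.foldl_cons, h x List.mem_cons_self]
    exact ih fun y hy => h y (List.mem_cons_of_mem x hy)

theorem memRun_eq_singleton_of_head? {J : Ivl} {l : List Ivl} (hhead : l.head? = some J)
    (h : ∀ x ∈ l, memStep Fl Fr {J} x = {J}) : memRun Fl Fr l = {J} := by
  cases l with
  | nil => simp at hhead
  | cons x l =>
    obtain rfl : x = J := Option.some.inj hhead
    rw [memRun, List.foldl_cons, memStep_empty]
    exact foldl_memStep_of_forall_eq Fl Fr fun y hy => h y (List.mem_cons_of_mem x hy)

theorem foldl_memStep_singleton_of_isChain {x : Ivl} {l : List Ivl}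
    (h : (x :: l).IsChain fun y z => memStep Fl Fr {y} z = {z}) :
    l.foldl (memStep Fl Fr) {x} = {(x :: l).getLast (List.cons_ne_nil x l)} := by
  induction l generalizing x with
  | nil => rfl
  | cons y l ih =>
    rw [List.isChain_cons_cons] at h
    rw [List.foldl_cons, h.1, ih h.2, List.getLast_cons_cons]

theorem card_memRun_le_one_of_isChain {l : List Ivl}
    (h : l.IsChain fun y z => memStep Fl Fr {y} z = {z}) : (memRun Fl Fr l).card ≤ 1 := by
  cases l with
  | nil => simp [memRun]
  | cons x l =>
    rw [memRun, List.foldl_cons, memStep_empty, foldl_memStep_singleton_of_isChain Fl Fr h,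
      card_singleton]

end memStep

theorem List.get_cons_cons_replicate {α : Type*} (x y z : α) (k : ℕ)
    (j : Fin (x :: y :: List.replicate k z).length) :
    (x :: y :: List.replicate k z).get j = if j.val = 0 then x else if j.val = 1 then y else z := by
  obtain ⟨_ | _ | j, hj⟩ := j <;> simp

noncomputable def probCardMemRunLeOne (Fl Fr : ℝ → Bool) (σ : List Ivl) : ℝ :=
  (#{π : Perm (Fin σ.length) | (memRun Fl Fr (List.ofFn fun i => σ.get (π i))).card ≤ 1} : ℝ) /
    Fintype.card (Perm (Fin σ.length))

section Instances

variable {Fl Fr : ℝ → Bool} {X Y Z : Ivl}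

theorem optM_cons_cons_replicate (hXY : ¬ Ivl.Conflict X Y) (hXZ : Ivl.Conflict X Z)
    (hYZ : Ivl.Conflict Y Z) {k : ℕ} (hk : k ≠ 0) :
    optM (X :: Y :: List.replicate k Z : List Ivl) = 2 := by
  have hXY' : X ≠ Y := by rintro rfl; exact hXY (Ivl.conflict_self X)
  have hXZ' : X ≠ Z := by rintro rfl; exact hXY (Ivl.conflict_comm.1 hYZ)
  have hYZ' : Y ≠ Z := by rintro rfl; exact hXY hXZ
  have htoFinset : (X :: Y :: List.replicate k Z : Multiset Ivl).toFinset = {X, Y, Z} := by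
    simp [List.toFinset_replicate_of_ne_zero hk]
  rw [optM, htoFinset]
  apply le_antisymm
  · refine Finset.sup_le fun T hT => ?_
    rw [mem_filter, mem_powerset] at hT
    by_contra! hcard
    obtain rfl : T = {X, Y, Z} := eq_of_subset_of_card_le hT.1 <|
      (card_le_three).trans (by omega)
    exact hT.2 X (by simp) Z (by simp) hXZ' hXZ
  · have hfeas : ({X, Y} : Finset Ivl) ∈ ({X, Y, Z} : Finset Ivl).powerset.filter Ivl.Feasible := by
      refine mem_filter.2 ⟨by simp [insert_subset_iff], ?_⟩
      intro I hI J hJ hIJ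
      simp only [mem_insert, mem_singleton] at hI hJ
      rcases hI with rfl | rfl <;> rcases hJ with rfl | rfl
      exacts [(hIJ rfl).elim, hXY, fun h => hXY (Ivl.conflict_comm.1 h), (hIJ rfl).elim]
    simpa [card_pair hXY'] using le_sup (f := card) hfeas

theorem one_sub_le_probCardMemRunLeOne_of_absorbing (hX : memStep Fl Fr {Z} X = {Z})
    (hY : memStep Fl Fr {Z} Y = {Z}) {k : ℕ} {ε : ℝ} (hε : 2 ≤ ε * (k + 1)) :
    1 - ε ≤ probCardMemRunLeOne Fl Fr (X :: Y :: List.replicate k Z) := by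
  rw [probCardMemRunLeOne]
  set σ := X :: Y :: List.replicate k Z
  have hn : σ.length = k + 2 := by simp [σ]
  let i₀ : Fin σ.length := ⟨0, by omega⟩
  let i₁ : Fin σ.length := ⟨1, by omega⟩
  have hZ : ∀ x ∈ σ, memStep Fl Fr {Z} x = {Z} := by
    intro x hx
    simp only [σ, List.mem_cons, List.mem_replicate] at hx
    rcases hx with rfl | rfl | ⟨-, rfl⟩
    exacts [hX, hY, memStep_singleton_self Fl Fr x]
  refine one_sub_le_card_filter_div_card
    (q := fun π : Perm (Fin σ.length) => π i₀ = i₀ ∨ π i₀ = i₁)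
    (fun π hπ => ?_) (show 0 < k + 1 by omega) (c := 2) (by exact_mod_cast hε) ?_
  · have h₀ : (π i₀).val ≠ 0 := fun h => hπ (Or.inl (Fin.ext h))
    have h₁ : (π i₀).val ≠ 1 := fun h => hπ (Or.inr (Fin.ext h))
    have hhead : σ.get (π i₀) = Z := by
      rw [List.get_cons_cons_replicate, if_neg h₀, if_neg h₁]
    rw [memRun_eq_singleton_of_head? Fl Fr (J := Z) ?_ ?_, card_singleton]
    · rw [List.head?_eq_getElem?, List.getElem?_ofFn, dif_pos (by omega)]
      exact congrArg some hhead
    · intro x hx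
      obtain ⟨i, rfl⟩ := List.mem_ofFn.1 hx
      exact hZ _ (List.get_mem σ _)
  · rw [Fintype.card_perm]
    refine le_trans ?_ (Equiv.Perm.card_filter_apply_eq_or_apply_eq_mul_le i₀ i₀ i₁)
    gcongr
    simp [hn]

theorem one_sub_le_probCardMemRunLeOne_of_replacing (hZX : memStep Fl Fr {Z} X = {X})
    (hZY : memStep Fl Fr {Z} Y = {Y}) (hXZ : memStep Fl Fr {X} Z = {Z})
    (hYZ : memStep Fl Fr {Y} Z = {Z}) {k : ℕ} {ε : ℝ} (hε : 2 ≤ ε * (k + 1)) :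
    1 - ε ≤ probCardMemRunLeOne Fl Fr (X :: Y :: List.replicate k Z) := by
  rw [probCardMemRunLeOne]
  set σ := X :: Y :: List.replicate k Z
  have hn : σ.length = k + 2 := by simp [σ]
  let i₀ : Fin σ.length := ⟨0, by omega⟩
  let i₁ : Fin σ.length := ⟨1, by omega⟩
  have hstep (c d : Fin σ.length) (h₀₁ : ¬ (c = i₀ ∧ d = i₁)) (h₁₀ : ¬ (c = i₁ ∧ d = i₀)) :
      memStep Fl Fr {σ.get c} (σ.get d) = {σ.get d} := by
    rw [List.get_cons_cons_replicate, List.get_cons_cons_replicate]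
    simp only [i₀, i₁, Fin.ext_iff] at h₀₁ h₁₀
    split_ifs <;> first
      | exact memStep_singleton_self Fl Fr _ | assumption | (exfalso; omega)
  refine one_sub_le_card_filter_div_card (q := fun π : Perm (Fin σ.length) =>
      ∃ p ∈ Fin.adjacentPairs σ.length, π p.1 = i₀ ∧ π p.2 = i₁)
    (fun π hπ => ?_) (show 0 < k + 1 by omega) (c := 2) (by exact_mod_cast hε) ?_
  · refine card_memRun_le_one_of_isChain Fl Fr <|
      List.isChain_ofFn.2 fun i hi => hstep _ _ ?_ ?_
    · rintro ⟨h₀, h₁⟩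
      exact hπ ⟨(⟨i, by omega⟩, ⟨i + 1, hi⟩), by simp [Fin.adjacentPairs], h₀, h₁⟩
    · rintro ⟨h₁, h₀⟩
      exact hπ ⟨(⟨i + 1, hi⟩, ⟨i, by omega⟩), by simp [Fin.adjacentPairs], h₀, h₁⟩
  · rw [Fintype.card_perm, Fintype.card_fin, show k + 1 = σ.length - 1 by omega]
    exact Equiv.Perm.card_filter_exists_mem_adjacentPairs_mul_le (by simp [i₀, i₁])

def OneDirectional (Fl Fr : ℝ → Bool) : Prop :=
  (∀ v : ℝ, 0 < v → Fl v = true ∧ Fr v = false) ∨ (∀ v : ℝ, 0 < v → Fr v = true ∧ Fl v = false)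

theorem not_oneDirectional_iff :
    ¬ OneDirectional Fl Fr ↔ ((∃ v, 0 < v ∧ Fl v = false) ∧ ∃ u, 0 < u ∧ Fr u = false) ∨
      ∃ v, 0 < v ∧ Fl v = true ∧ Fr v = true := by
  unfold OneDirectional
  grind

def ForcedRatioTwo (Fl Fr : ℝ → Bool) (ε : ℝ) : Prop :=
  ∃ L : ℝ, 0 < L ∧ ∃ σ₀ : List Ivl,
    (∀ I ∈ σ₀, I.length = L) ∧ optM (σ₀ : Multiset Ivl) = 2 ∧ 1 - ε ≤ probCardMemRunLeOne Fl Fr σ₀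

theorem forcedRatioTwo_of_overlapping {a L ε : ℝ} (hL : 0 < L) (ha : 0 < a) (haL : a < L)
    (hε : 0 < ε)
    (hprob : ∀ k : ℕ, 2 ≤ ε * (k + 1) → 1 - ε ≤ probCardMemRunLeOne Fl Fr
      (Ivl.ofLength 0 L hL :: Ivl.ofLength L L hL :: List.replicate k (Ivl.ofLength a L hL))) :
    ForcedRatioTwo Fl Fr ε := by
  have hk : 2 ≤ ε * ⌈2 / ε⌉₊ := (div_le_iff₀' hε).1 (Nat.le_ceil _)
  refine ⟨L, hL, _, ?_, optM_cons_cons_replicate ?_ ?_ ?_ (Nat.ceil_pos.2 (by positivity)).ne',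
    hprob ⌈2 / ε⌉₊ (by linarith)⟩
  · simp only [List.mem_cons, List.mem_replicate]
    rintro I (rfl | rfl | ⟨-, rfl⟩) <;> exact Ivl.length_ofLength _ _ _
  · rw [Ivl.conflict_ofLength_iff, zero_sub, abs_neg, abs_of_pos hL]
    exact lt_irrefl L
  · rw [Ivl.conflict_ofLength_iff, zero_sub, abs_neg, abs_of_pos ha]
    exact haL
  · rw [Ivl.conflict_ofLength_iff, abs_of_pos (sub_pos.2 haL)]
    linarith

theorem forcedRatioTwo_of_false_of_false {u v ε : ℝ} (hu : 0 < u) (hv : 0 < v) (hε : 0 < ε)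
    (hFl : Fl v = false) (hFr : Fr u = false) : ForcedRatioTwo Fl Fr ε := by
  have hL : 0 < u + v := by positivity
  refine forcedRatioTwo_of_overlapping hL hu (by linarith) hε
    fun k hk => one_sub_le_probCardMemRunLeOne_of_absorbing ?_ ?_ hk
  · rw [memStep_ofLength_of_lt Fl Fr hL (s := 0) (t := u) hu (by linarith),
      show 0 + (u + v) - u = v by ring, hFl, if_neg Bool.false_ne_true]
  · rw [memStep_ofLength_of_gt Fl Fr hL (s := u + v) (t := u) (by linarith) (by linarith),
      show u + (u + v) - (u + v) = u by ring, hFr, if_neg Bool.false_ne_true]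

theorem forcedRatioTwo_of_true_of_true {v ε : ℝ} (hv : 0 < v) (hε : 0 < ε)
    (hFl : Fl v = true) (hFr : Fr v = true) : ForcedRatioTwo Fl Fr ε := by
  have hL : 0 < 2 * v := by positivity
  have hleft : 0 + 2 * v - v = v := by ring
  have hright : v + 2 * v - 2 * v = v := by ring
  refine forcedRatioTwo_of_overlapping hL hv (by linarith) hε
    fun k hk => one_sub_le_probCardMemRunLeOne_of_replacing ?_ ?_ ?_ ?_ hk
  · rw [memStep_ofLength_of_lt Fl Fr hL (s := 0) (t := v) hv (by linarith), hleft, hFl, if_pos rfl]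
  · rw [memStep_ofLength_of_gt Fl Fr hL (s := 2 * v) (t := v) (by linarith) (by linarith), hright,
      hFr, if_pos rfl]
  · rw [memStep_ofLength_of_gt Fl Fr hL (s := v) (t := 0) hv (by linarith), hleft, hFr, if_pos rfl]
  · rw [memStep_ofLength_of_lt Fl Fr hL (s := v) (t := 2 * v) (by linarith) (by linarith), hright,
      hFl, if_pos rfl]

end Instances

/-- Every deterministic memoryless algorithm `A_{F_l, F_r}` that is not one-directional can
be forced to competitive ratio at least `2` for unweighted single-length interval selection
under random-order arrivals: for every `ε ∈ (0,1)` there are a length `L > 0` and a finite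
multiset of intervals of length `L` (presented as a list `σ₀`) with optimum `2`, such that
when the elements arrive in uniformly random order the final solution of `A_{F_l, F_r}` has
at most one interval with probability at least `1 - ε`. -/
theorem not_one_directional_forced_two (Fl Fr : ℝ → Bool)
    (hnot : ¬ ((∀ v : ℝ, 0 < v → Fl v = true ∧ Fr v = false) ∨
               (∀ v : ℝ, 0 < v → Fr v = true ∧ Fl v = false)))
    (ε : ℝ) (hε : ε ∈ Set.Ioo (0 : ℝ) 1) :
    ∃ L : ℝ, 0 < L ∧ ∃ σ₀ : List Ivl,
      (∀ I ∈ σ₀, I.length = L) ∧ optM (σ₀ : Multiset Ivl) = 2 ∧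
      (1 : ℝ) - ε ≤
        ((Finset.univ.filter (fun π : Equiv.Perm (Fin σ₀.length) =>
            (memRun Fl Fr (List.ofFn (fun i => σ₀.get (π i)))).card ≤ 1)).card : ℝ) /
          (Fintype.card (Equiv.Perm (Fin σ₀.length)) : ℝ) := by
  rcases not_oneDirectional_iff.1 hnot with ⟨⟨v, hv, hFl⟩, u, hu, hFr⟩ | ⟨v, hv, hFl, hFr⟩
  · exact forcedRatioTwo_of_false_of_false hu hv hε.1 hFl hFr
  · exact forcedRatioTwo_of_true_of_true hv hε.1 hFl hFr
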